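/- Let N be a nonzero Nijenhuis-type tensor on V = ℂ², and let Π = ℂ • N(e₁,e₂) be the complex span of the image of N (a complex line). Let h : V × V → V be a symmetric ℂ-bilinear map. Then h satisfies the two relations N(h(ξ,η), ζ) = N(h(ξ,ζ), η) and h(ξ, N(η,ζ)) = 0 for all ξ, η, ζ ∈ V if and only if h(x,y) = 0 whenever x ∈ Π and h(x,y) ∈ Π for all x, y ∈ V. -/

import Mathlib

/-!
On `ℂ²` every Nijenhuis-type tensor is `N x y = conj (det (x, y)) • n` with `n = N(e₁, e₂)`, so
`N x n = 0` exactly when `x ∈ Π = ℂ n`. The relations with `ζ = n`, resp. `(η, ζ) = (e₁, e₂)`,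
then force `h(·, n) = 0` and `h` to take values in `Π`. Conversely, for fixed `ξ` the defect
`N (h ξ η) ζ - N (h ξ ζ) η` is itself of Nijenhuis type in `(η, ζ)` and vanishes for `η = n ≠ 0`;
a Nijenhuis-type tensor on `ℂ²` killed by a nonzero vector is zero.
-/

open ComplexConjugate

/-- A Nijenhuis-type tensor on a complex vector space `V`: ℝ-bilinear (additive in each
argument), alternating, and conjugate-homogeneous in each argument over ℂ. -/
structure IsNijenhuisType {V : Type*} [AddCommGroup V] [Module ℂ V] (N : V → V → V) : Prop where
  add_left : ∀ x y z : V, N (x + y) z = N x z + N y z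
  add_right : ∀ x y z : V, N x (y + z) = N x y + N x z
  conj_smul_left : ∀ (c : ℂ) (x y : V), N (c • x) y = conj c • N x y
  conj_smul_right : ∀ (c : ℂ) (x y : V), N x (c • y) = conj c • N x y
  alt : ∀ x y : V, N x y = - N y x

/-- A symmetric ℂ-bilinear map `h : V × V → V`. -/
structure IsSymmCBilinear {V : Type*} [AddCommGroup V] [Module ℂ V] (h : V → V → V) : Prop where
  add_left : ∀ x y z : V, h (x + y) z = h x z + h y z
  smul_left : ∀ (c : ℂ) (x y : V), h (c • x) y = c • h x y
  add_right : ∀ x y z : V, h x (y + z) = h x y + h x z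
  smul_right : ∀ (c : ℂ) (x y : V), h x (c • y) = c • h x y
  symm : ∀ x y : V, h x y = h y x

def det₂ {R : Type*} [CommRing R] (x y : R × R) : R := x.1 * y.2 - x.2 * y.1

lemma mem_span_singleton_of_det₂_eq_zero {K : Type*} [Field K] {x n : K × K} (hn : n ≠ 0)
    (hx : det₂ x n = 0) : x ∈ Submodule.span K {n} := by
  rw [det₂] at hx
  rw [Submodule.mem_span_singleton]
  by_cases h₁ : n.1 = 0
  · have h₂ : n.2 ≠ 0 := fun h₂ => hn (Prod.ext h₁ h₂)
    refine ⟨x.2 / n.2, Prod.ext ?_ ?_⟩ <;> simp only [Prod.smul_fst, Prod.smul_snd, smul_eq_mul]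
    · field_simp; linear_combination -hx
    · field_simp
  · refine ⟨x.1 / n.1, Prod.ext ?_ ?_⟩ <;> simp only [Prod.smul_fst, Prod.smul_snd, smul_eq_mul]
    · field_simp
    · field_simp; linear_combination hx

namespace IsNijenhuisType

section Module

variable {V : Type*} [AddCommGroup V] [Module ℂ V] {N : V → V → V}

lemma zero_left (hN : IsNijenhuisType N) (y : V) : N 0 y = 0 := by
  simpa using hN.conj_smul_left 0 0 y

lemma apply_self (hN : IsNijenhuisType N) (x : V) : N x x = 0 := by
  have h : (2 : ℂ) • N x x = 0 := by
    rw [two_smul]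
    nth_rewrite 2 [hN.alt x x]
    exact add_neg_cancel _
  exact (smul_eq_zero.mp h).resolve_left two_ne_zero

lemma comp_sub_swap (hN : IsNijenhuisType N) (g : V →ₗ[ℂ] V) :
    IsNijenhuisType fun η ζ => N (g η) ζ - N (g ζ) η where
  add_left x y z := by simp only [map_add, hN.add_left, hN.add_right]; abel
  add_right x y z := by simp only [map_add, hN.add_left, hN.add_right]; abel
  conj_smul_left c x y := by
    simp only [map_smul, hN.conj_smul_left, hN.conj_smul_right, smul_sub]
  conj_smul_right c x y := by
    simp only [map_smul, hN.conj_smul_left, hN.conj_smul_right, smul_sub]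
  alt x y := (neg_sub _ _).symm

end Module

variable {N : ℂ × ℂ → ℂ × ℂ → ℂ × ℂ}

theorem eq_conj_det₂_smul (hN : IsNijenhuisType N) (x y : ℂ × ℂ) :
    N x y = conj (det₂ x y) • N (1, 0) (0, 1) := by
  have hdecomp : ∀ v : ℂ × ℂ, v = v.1 • ((1, 0) : ℂ × ℂ) + v.2 • ((0, 1) : ℂ × ℂ) := by
    intro v; ext <;> simp
  conv_lhs => rw [hdecomp x, hdecomp y]
  simp only [hN.add_left, hN.add_right, hN.conj_smul_left, hN.conj_smul_right, hN.apply_self,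
    hN.alt (0, 1) (1, 0), det₂, map_sub, map_mul]
  module

lemma eq_zero_iff (hN : IsNijenhuisType N) : N = 0 ↔ N (1, 0) (0, 1) = 0 := by
  refine ⟨fun h => by rw [h]; rfl, fun h₁₂ => ?_⟩
  funext x y
  rw [hN.eq_conj_det₂_smul, h₁₂, smul_zero]
  rfl

lemma eq_zero_of_apply_left_eq_zero (hN : IsNijenhuisType N) {v : ℂ × ℂ} (hv : v ≠ 0)
    (hvN : ∀ ζ, N v ζ = 0) : N = 0 := by
  rw [hN.eq_zero_iff]
  by_contra h₁₂
  have hdet (ζ : ℂ × ℂ) : det₂ v ζ = 0 := by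
    have := hvN ζ
    rwa [hN.eq_conj_det₂_smul, smul_eq_zero, map_eq_zero, or_iff_left h₁₂] at this
  have hv₁ : v.1 = 0 := by simpa [det₂] using hdet (0, 1)
  have hv₂ : v.2 = 0 := by simpa [det₂] using hdet (1, 0)
  exact hv (Prod.ext hv₁ hv₂)

lemma mem_span_of_apply_eq_zero (hN : IsNijenhuisType N) (hn : N (1, 0) (0, 1) ≠ 0) {x : ℂ × ℂ}
    (hx : N x (N (1, 0) (0, 1)) = 0) : x ∈ Submodule.span ℂ {N (1, 0) (0, 1)} := by
  rw [hN.eq_conj_det₂_smul, smul_eq_zero, map_eq_zero] at hx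
  exact mem_span_singleton_of_det₂_eq_zero hn (hx.resolve_right hn)

end IsNijenhuisType

def IsSymmCBilinear.toLinearMap {V : Type*} [AddCommGroup V] [Module ℂ V] {h : V → V → V}
    (hh : IsSymmCBilinear h) (ξ : V) : V →ₗ[ℂ] V where
  toFun := h ξ
  map_add' := hh.add_right ξ
  map_smul' c x := hh.smul_right c ξ x

/-- for a nonzero Nijenhuis-type tensor on `ℂ²` with characteristic line
`Π = ℂ • N(e₁,e₂)`, a symmetric ℂ-bilinear `h` satisfies the two symbol relations iff
`h(Π,·) = 0` and `h` takes values in `Π` (i.e. `g₂ = S²Ann(Π) ⊗ Π`). -/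
theorem stmt5 (N : ℂ × ℂ → ℂ × ℂ → ℂ × ℂ) (hN : IsNijenhuisType N) (hn : N ≠ 0)
    (h : ℂ × ℂ → ℂ × ℂ → ℂ × ℂ) (hh : IsSymmCBilinear h) :
    ((∀ ξ η ζ : ℂ × ℂ, N (h ξ η) ζ = N (h ξ ζ) η) ∧
     (∀ ξ η ζ : ℂ × ℂ, h ξ (N η ζ) = 0)) ↔
    ((∀ x y : ℂ × ℂ, x ∈ Submodule.span ℂ {N (1, 0) (0, 1)} → h x y = 0) ∧
     (∀ x y : ℂ × ℂ, h x y ∈ Submodule.span ℂ {N (1, 0) (0, 1)})) := by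
  set n := N (1, 0) (0, 1)
  have hn₀ : n ≠ 0 := hN.eq_zero_iff.not.mp hn
  constructor
  · rintro ⟨hcomm, hkill⟩
    have hn_right (ξ : ℂ × ℂ) : h ξ n = 0 := hkill ξ (1, 0) (0, 1)
    refine ⟨fun x y hx => ?_, fun ξ η => hN.mem_span_of_apply_eq_zero hn₀ ?_⟩
    · obtain ⟨a, rfl⟩ := Submodule.mem_span_singleton.mp hx
      rw [hh.smul_left, hh.symm, hn_right, smul_zero]
    · rw [hcomm, hn_right, hN.zero_left]
  · rintro ⟨hvanish, hvalues⟩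
    have hn_right (ξ : ℂ × ℂ) : h ξ n = 0 := by
      rw [hh.symm]; exact hvanish n ξ (Submodule.mem_span_singleton_self n)
    refine ⟨fun ξ => ?_, fun ξ η ζ => ?_⟩
    · have hψ_n (ζ : ℂ × ℂ) : N (h ξ n) ζ - N (h ξ ζ) n = 0 := by
        obtain ⟨a, ha⟩ := Submodule.mem_span_singleton.mp (hvalues ξ ζ)
        rw [hn_right, hN.zero_left, ← ha, hN.conj_smul_left, hN.apply_self, smul_zero, sub_zero]
      have hψ := (hN.comp_sub_swap (hh.toLinearMap ξ)).eq_zero_of_apply_left_eq_zero hn₀ hψ_n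
      intro η ζ
      exact sub_eq_zero.mp (congrFun₂ hψ η ζ)
    · rw [hN.eq_conj_det₂_smul, hh.smul_right, hn_right, smul_zero]
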